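/- Let F : X → Y and G : Y → Z be shape morphisms of topological spaces. If sd F ≤ n or sd G ≤ n, then sd(G ∘ F) ≤ n. -/

import Mathlib

universe u

noncomputable section

namespace ShapePaper

open CategoryTheory

/-! ### H-maps: morphisms of the homotopy category HTop -/

/-- The setoid of continuous maps up to homotopy. -/
def homotopySetoid (X Y : Type u) [TopologicalSpace X] [TopologicalSpace Y] :
    Setoid C(X, Y) :=
  ⟨ContinuousMap.Homotopic, ContinuousMap.Homotopic.equivalence⟩

/-- An H-map `X → Y` is a homotopy class of continuous maps `X → Y`,
i.e. a morphism of the homotopy category `HTop`. -/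
def HMap (X Y : Type u) [TopologicalSpace X] [TopologicalSpace Y] : Type u :=
  Quotient (homotopySetoid X Y)

variable {X Y Z W : Type u} [TopologicalSpace X] [TopologicalSpace Y]
  [TopologicalSpace Z] [TopologicalSpace W]

/-- The H-map (homotopy class) of a continuous map. -/
def HMap.mk (f : C(X, Y)) : HMap X Y := Quotient.mk (homotopySetoid X Y) f

/-- The identity H-map. -/
protected def HMap.id (X : Type u) [TopologicalSpace X] : HMap X X :=
  HMap.mk (ContinuousMap.id X)

/-- Composition of H-maps. -/
protected def HMap.comp (g : HMap Y Z) (f : HMap X Y) : HMap X Z :=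
  Quotient.liftOn₂ g f (fun g f => HMap.mk (g.comp f))
    (fun _ _ _ _ hg hf => Quotient.sound (ContinuousMap.Homotopic.comp hg hf))

theorem HMap.comp_assoc (h : HMap Z W) (g : HMap Y Z) (f : HMap X Y) :
    HMap.comp (HMap.comp h g) f = HMap.comp h (HMap.comp g f) := by
  induction h using Quotient.inductionOn
  induction g using Quotient.inductionOn
  induction f using Quotient.inductionOn
  rfl

theorem HMap.id_comp (f : HMap X Y) : HMap.comp (HMap.id Y) f = f := by
  induction f using Quotient.inductionOn
  rfl

theorem HMap.comp_id (f : HMap X Y) : HMap.comp f (HMap.id X) = f := by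
  induction f using Quotient.inductionOn
  rfl

/-! ### Polyhedra and the category HPol -/

/-- A realization of the space `P` as (the space of) a simplicial complex. -/
structure PolyhedralRealization (P : Type u) [TopologicalSpace P] where
  /-- the ambient topological real vector space -/
  E : Type u
  [addCommGroup : AddCommGroup E]
  [module : Module ℝ E]
  [topE : TopologicalSpace E]
  /-- the simplicial complex -/
  complex : Geometry.SimplicialComplex ℝ E
  /-- `P` is homeomorphic to the space (carrier) of the complex -/
  homeo : P ≃ₜ complex.space

attribute [instance] PolyhedralRealization.addCommGroup PolyhedralRealization.module
  PolyhedralRealization.topE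

/-- The realization has dimension `≤ n`: every simplex has at most `n + 1` vertices. -/
def PolyhedralRealization.DimLE {P : Type u} [TopologicalSpace P]
    (R : PolyhedralRealization P) (n : ℕ) : Prop :=
  ∀ s ∈ R.complex.faces, s.card ≤ n + 1

/-- `P` is a polyhedron. -/
def IsPolyhedron (P : Type u) [TopologicalSpace P] : Prop :=
  Nonempty (PolyhedralRealization P)

/-- `P` is a polyhedron of dimension `≤ n`. -/
def IsPolyhedronDimLE (P : Type u) [TopologicalSpace P] (n : ℕ) : Prop :=
  ∃ R : PolyhedralRealization P, R.DimLE n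

/-- `X` is an object of `HPol`, i.e. has the homotopy type of a polyhedron. -/
def InHPol (X : Type u) [TopologicalSpace X] : Prop :=
  ∃ (P : Type u) (_ : TopologicalSpace P), IsPolyhedron P ∧
    Nonempty (ContinuousMap.HomotopyEquiv X P)

/-- The H-map `f` factors in `HPol` through some polyhedron of dimension `≤ n`. -/
def HMap.FactorsThruPolyhedronDimLE (f : HMap X Y) (n : ℕ) : Prop :=
  ∃ (P : Type u) (_ : TopologicalSpace P), IsPolyhedronDimLE P n ∧
    ∃ (u : HMap X P) (v : HMap P Y), f = v.comp u

/-- `X` is homotopy dominated by a polyhedron of dimension `≤ n`. -/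
def DominatedByPolyhedronDimLE (X : Type u) [TopologicalSpace X] (n : ℕ) : Prop :=
  ∃ (P : Type u) (_ : TopologicalSpace P), IsPolyhedronDimLE P n ∧
    ∃ (s : HMap X P) (d : HMap P X), d.comp s = HMap.id X

/-! ### Inverse systems in HPol -/

/-- An inverse system in the category `HPol`: a directed index set `Idx`, spaces `obj i`
having the homotopy type of polyhedra, and bonding H-maps. -/
structure InverseSystem : Type (u + 1) where
  /-- the index set -/
  Idx : Type u
  [preorder : Preorder Idx]
  [idxNonempty : Nonempty Idx]
  directed : ∀ a b : Idx, ∃ c, a ≤ c ∧ b ≤ c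
  /-- the terms of the system -/
  obj : Idx → Type u
  [topObj : ∀ i, TopologicalSpace (obj i)]
  inHPol : ∀ i, InHPol (obj i)
  /-- the bonding H-maps -/
  bond : ∀ {i j : Idx}, i ≤ j → HMap (obj j) (obj i)
  bond_refl : ∀ i : Idx, bond (le_refl i) = HMap.id (obj i)
  bond_trans : ∀ {i j k : Idx} (hij : i ≤ j) (hjk : j ≤ k),
    HMap.comp (bond hij) (bond hjk) = bond (hij.trans hjk)

attribute [instance] InverseSystem.preorder InverseSystem.idxNonempty InverseSystem.topObj

/-- A morphism of inverse systems in `HPol`. -/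
structure SysMor (𝓧 𝓨 : InverseSystem.{u}) : Type u where
  /-- the index function `φ` -/
  idxMap : 𝓨.Idx → 𝓧.Idx
  /-- the H-maps `f_μ : X_{φ(μ)} → Y_μ` -/
  hmap : ∀ μ : 𝓨.Idx, HMap (𝓧.obj (idxMap μ)) (𝓨.obj μ)
  coherent : ∀ {μ μ' : 𝓨.Idx} (h : μ ≤ μ'),
    ∃ (l : 𝓧.Idx) (h₁ : idxMap μ ≤ l) (h₂ : idxMap μ' ≤ l),
      (𝓨.bond h).comp ((hmap μ').comp (𝓧.bond h₂)) = (hmap μ).comp (𝓧.bond h₁)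

variable {𝓧 𝓨 𝓩 : InverseSystem.{u}}

/-- `f_{μλ} := f_μ ∘ p_{φ(μ)λ}` for `λ ≥ φ(μ)`. -/
def SysMor.shift (F : SysMor 𝓧 𝓨) (μ : 𝓨.Idx) {l : 𝓧.Idx} (h : F.idxMap μ ≤ l) :
    HMap (𝓧.obj l) (𝓨.obj μ) :=
  (F.hmap μ).comp (𝓧.bond h)

theorem SysMor.shift_comp (F : SysMor 𝓧 𝓨) (μ : 𝓨.Idx) {l l' : 𝓧.Idx}
    (h : F.idxMap μ ≤ l) (h' : l ≤ l') :
    (F.shift μ h).comp (𝓧.bond h') = F.shift μ (h.trans h') := by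
  rw [SysMor.shift, SysMor.shift, HMap.comp_assoc, 𝓧.bond_trans]

/-- Coherence, pushed up to all larger indices. -/
theorem SysMor.coherent' (F : SysMor 𝓧 𝓨) {μ μ' : 𝓨.Idx} (h : μ ≤ μ') :
    ∃ (l : 𝓧.Idx) (h₁ : F.idxMap μ ≤ l) (h₂ : F.idxMap μ' ≤ l),
      ∀ {l' : 𝓧.Idx} (hl : l ≤ l'),
        (𝓨.bond h).comp ((F.hmap μ').comp (𝓧.bond (h₂.trans hl))) =
          (F.hmap μ).comp (𝓧.bond (h₁.trans hl)) := by
  obtain ⟨l, h₁, h₂, heq⟩ := F.coherent h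
  refine ⟨l, h₁, h₂, ?_⟩
  intro l' hl
  have := congrArg (fun t => HMap.comp t (𝓧.bond hl)) heq
  simpa only [HMap.comp_assoc, InverseSystem.bond_trans] using this

/-- The dimension of a morphism of inverse systems is `≤ n`. -/
def SysMor.DimLE (F : SysMor 𝓧 𝓨) (n : ℕ) : Prop :=
  ∀ μ : 𝓨.Idx, ∃ (l : 𝓧.Idx) (h : F.idxMap μ ≤ l),
    (F.shift μ h).FactorsThruPolyhedronDimLE n

/-- The dimension of an inverse system is `≤ n` : every term is homotopy dominated by
a polyhedron of dimension `≤ n`. -/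
def InverseSystem.DimLE (𝓧 : InverseSystem.{u}) (n : ℕ) : Prop :=
  ∀ i : 𝓧.Idx, DominatedByPolyhedronDimLE (𝓧.obj i) n

/-- Equivalence of morphisms of inverse systems. -/
def SysMor.Equiv (F G : SysMor 𝓧 𝓨) : Prop :=
  ∀ μ : 𝓨.Idx, ∃ (l : 𝓧.Idx) (h₁ : F.idxMap μ ≤ l) (h₂ : G.idxMap μ ≤ l),
    F.shift μ h₁ = G.shift μ h₂

/-- A pro-morphism (morphism of pro-HPol) is an equivalence class of morphisms
of inverse systems. -/
def ProMor (𝓧 𝓨 : InverseSystem.{u}) : Type u :=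
  Quot (@SysMor.Equiv 𝓧 𝓨)

/-- The pro-morphism represented by a morphism of inverse systems. -/
def ProMor.mk (F : SysMor 𝓧 𝓨) : ProMor 𝓧 𝓨 := Quot.mk _ F

/-- The dimension of a pro-morphism is `≤ n` if it admits a representative of
dimension `≤ n`. -/
def ProMor.DimLE (f : ProMor 𝓧 𝓨) (n : ℕ) : Prop :=
  ∃ F : SysMor 𝓧 𝓨, ProMor.mk F = f ∧ F.DimLE n

/-- The identity morphism of an inverse system. -/
def SysMor.identity (𝓧 : InverseSystem.{u}) : SysMor 𝓧 𝓧 where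
  idxMap := id
  hmap i := HMap.id (𝓧.obj i)
  coherent := by
    intro μ μ' h
    refine ⟨μ', h, le_refl _, ?_⟩
    show (𝓧.bond h).comp ((HMap.id _).comp (𝓧.bond (le_refl μ'))) =
      (HMap.id _).comp (𝓧.bond h)
    rw [HMap.id_comp, HMap.id_comp, 𝓧.bond_trans]

/-- Composition of morphisms of inverse systems. -/
def SysMor.comp (G : SysMor 𝓨 𝓩) (F : SysMor 𝓧 𝓨) : SysMor 𝓧 𝓩 where
  idxMap := F.idxMap ∘ G.idxMap
  hmap ν := (G.hmap ν).comp (F.hmap (G.idxMap ν))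
  coherent := by
    intro ν ν' h
    obtain ⟨μ, hμ₁, hμ₂, hg⟩ := G.coherent h
    obtain ⟨l₁, h₁₁, h₁₂, hf₁⟩ := F.coherent' hμ₁
    obtain ⟨l₂, h₂₁, h₂₂, hf₂⟩ := F.coherent' hμ₂
    obtain ⟨l, hl₁, hl₂⟩ := 𝓧.directed l₁ l₂
    refine ⟨l, h₁₁.trans hl₁, h₂₁.trans hl₂, ?_⟩
    have e₁ := hf₁ hl₁
    have e₂ := hf₂ hl₂
    have hg₂ := congrArg
      (fun t => HMap.comp t ((F.hmap μ).comp (𝓧.bond (h₂₂.trans hl₂)))) hg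
    simp only [HMap.comp_assoc] at hg₂ e₁ e₂ ⊢
    rw [← e₂, hg₂, ← e₁]

/-- Composition of pro-morphisms (via choice of representatives). -/
def ProMor.comp (g : ProMor 𝓨 𝓩) (f : ProMor 𝓧 𝓨) : ProMor 𝓧 𝓩 :=
  ProMor.mk ((Quot.out g).comp (Quot.out f))

/-- The identity pro-morphism. -/
protected def ProMor.id (𝓧 : InverseSystem.{u}) : ProMor 𝓧 𝓧 :=
  ProMor.mk (SysMor.identity 𝓧)

/-- `α` is an isomorphism of pro-HPol. -/
def ProMor.IsIso (α : ProMor 𝓧 𝓨) : Prop :=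
  ∃ β : ProMor 𝓨 𝓧, β.comp α = ProMor.id 𝓧 ∧ α.comp β = ProMor.id 𝓨

/-! ### Restriction to a cofinal subset -/

/-- The subsystem of `𝓨` determined by a cofinal subset `S` of the index set. -/
def InverseSystem.restrict (𝓨 : InverseSystem.{u}) (S : Set 𝓨.Idx)
    (hcof : ∀ μ : 𝓨.Idx, ∃ μ' ∈ S, μ ≤ μ') : InverseSystem.{u} where
  Idx := ↥S
  idxNonempty := by
    obtain ⟨μ⟩ := 𝓨.idxNonempty
    obtain ⟨μ', hs, -⟩ := hcof μ
    exact ⟨⟨μ', hs⟩⟩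
  directed a b := by
    obtain ⟨c, hac, hbc⟩ := 𝓨.directed a b
    obtain ⟨c', hs, hcc'⟩ := hcof c
    exact ⟨⟨c', hs⟩, Subtype.coe_le_coe.mp (le_trans hac hcc'),
      Subtype.coe_le_coe.mp (le_trans hbc hcc')⟩
  obj i := 𝓨.obj i
  topObj i := 𝓨.topObj i
  inHPol i := 𝓨.inHPol i
  bond h := 𝓨.bond h
  bond_refl i := 𝓨.bond_refl i
  bond_trans h₁ h₂ := 𝓨.bond_trans h₁ h₂

/-- The morphism induced by `F : 𝓧 → 𝓨` and the inclusion of a cofinal subset of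
the index set of `𝓨`. -/
def SysMor.restrict (F : SysMor 𝓧 𝓨) (S : Set 𝓨.Idx)
    (hcof : ∀ μ : 𝓨.Idx, ∃ μ' ∈ S, μ ≤ μ') : SysMor 𝓧 (𝓨.restrict S hcof) where
  idxMap μ := F.idxMap μ.val
  hmap μ := F.hmap μ.val
  coherent := by
    intro μ μ' h
    exact F.coherent h

/-! ### Expansions and shape dimension -/

/-- An `HPol`-expansion of the topological space `X`. -/
structure Expansion (X : Type u) [TopologicalSpace X] (𝓧 : InverseSystem.{u}) where
  /-- the projection H-maps `p_λ : X → X_λ` -/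
  proj : ∀ l : 𝓧.Idx, HMap X (𝓧.obj l)
  proj_bond : ∀ {l l' : 𝓧.Idx} (h : l ≤ l'), (𝓧.bond h).comp (proj l') = proj l
  /-- every H-map into a space of `HPol` factors through some term of the system -/
  factors : ∀ (P : Type u) [TopologicalSpace P], InHPol P → ∀ f : HMap X P,
    ∃ (l : 𝓧.Idx) (g : HMap (𝓧.obj l) P), g.comp (proj l) = f
  /-- the factorization is unique after passing to a larger index -/
  factors_unique : ∀ (P : Type u) [TopologicalSpace P], InHPol P →
    ∀ (l : 𝓧.Idx) (g g' : HMap (𝓧.obj l) P), g.comp (proj l) = g'.comp (proj l) →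
      ∃ (l' : 𝓧.Idx) (h : l ≤ l'), g.comp (𝓧.bond h) = g'.comp (𝓧.bond h)

/-- The shape dimension of a topological space is `≤ n`: `X` admits an
`HPol`-expansion all of whose terms are homotopy dominated by polyhedra of
dimension `≤ n`. -/
def ShapeDimLE (X : Type u) [TopologicalSpace X] (n : ℕ) : Prop :=
  ∃ (𝓧 : InverseSystem.{u}) (_ : Expansion X 𝓧), 𝓧.DimLE n

/-- The morphism of inverse systems `F` represents the H-map `f` with respect to the
expansions `pX` and `pY`, i.e. `q_μ ∘ f = f_μ ∘ p_{φ(μ)}` for all `μ`. -/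
def Represents {X Y : Type u} [TopologicalSpace X] [TopologicalSpace Y]
    {𝓧 𝓨 : InverseSystem.{u}} (pX : Expansion X 𝓧) (pY : Expansion Y 𝓨)
    (f : HMap X Y) (F : SysMor 𝓧 𝓨) : Prop :=
  ∀ μ : 𝓨.Idx, (F.hmap μ).comp (pX.proj (F.idxMap μ)) = (pY.proj μ).comp f

/-- The shape dimension of an H-map `f : X → Y` is `≤ n`: the shape morphism
induced by `f` admits a representation by a pro-morphism of dimension `≤ n`. -/
def HMapShapeDimLE {X Y : Type u} [TopologicalSpace X] [TopologicalSpace Y]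
    (f : HMap X Y) (n : ℕ) : Prop :=
  ∃ (𝓧 𝓨 : InverseSystem.{u}) (pX : Expansion X 𝓧) (pY : Expansion Y 𝓨)
    (F : SysMor 𝓧 𝓨), Represents pX pY f F ∧ (ProMor.mk F).DimLE n

/-- The shape dimension of a space, as an extended natural number. -/
def shapeDim (X : Type u) [TopologicalSpace X] : ℕ∞ :=
  sInf {n : ℕ∞ | ∃ m : ℕ, n = (m : ℕ∞) ∧ ShapeDimLE X m}

/-- The shape dimension of an H-map, as an extended natural number. -/
def hmapShapeDim {X Y : Type u} [TopologicalSpace X] [TopologicalSpace Y]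
    (f : HMap X Y) : ℕ∞ :=
  sInf {n : ℕ∞ | ∃ m : ℕ, n = (m : ℕ∞) ∧ HMapShapeDimLE f m}

end ShapePaper

/-!
Composing a term `f_{μλ}` of a morphism of inverse systems with H-maps on either side
preserves a factorization through a polyhedron of dimension `≤ n`. If `G` has dimension
`≤ n`, coherence of `F` rewrites `(G ∘ F)_{νλ}` as `g_{νμ} ∘ f_{μλ}` at an index `μ` where
`g_{νμ}` factors; if `F` does, `(G ∘ F)_{νλ} = g_ν ∘ f_{φ(ν)λ}` directly. Since composition
of pro-morphisms uses arbitrary representatives, one also needs that having dimension `≤ n`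
passes to equivalent morphisms of inverse systems.
-/

namespace ShapePaper

variable {X Y Z W : Type u} [TopologicalSpace X] [TopologicalSpace Y]
  [TopologicalSpace Z] [TopologicalSpace W]
variable {𝓧 𝓨 𝓩 : InverseSystem.{u}} {n : ℕ}

theorem HMap.FactorsThruPolyhedronDimLE.postcomp {f : HMap X Y}
    (hf : f.FactorsThruPolyhedronDimLE n) (g : HMap Y Z) :
    (g.comp f).FactorsThruPolyhedronDimLE n := by
  obtain ⟨P, _, hP, u, v, rfl⟩ := hf
  exact ⟨P, ‹_›, hP, u, g.comp v, (HMap.comp_assoc _ _ _).symm⟩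

theorem HMap.FactorsThruPolyhedronDimLE.precomp {f : HMap X Y}
    (hf : f.FactorsThruPolyhedronDimLE n) (g : HMap W X) :
    (f.comp g).FactorsThruPolyhedronDimLE n := by
  obtain ⟨P, _, hP, u, v, rfl⟩ := hf
  exact ⟨P, ‹_›, hP, u.comp g, v, HMap.comp_assoc _ _ _⟩

namespace SysMor

theorem Equiv.refl (F : SysMor 𝓧 𝓨) : F.Equiv F :=
  fun μ => ⟨F.idxMap μ, le_rfl, le_rfl, rfl⟩

theorem Equiv.symm {F G : SysMor 𝓧 𝓨} (h : F.Equiv G) : G.Equiv F := fun μ => by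
  obtain ⟨l, h₁, h₂, he⟩ := h μ
  exact ⟨l, h₂, h₁, he.symm⟩

theorem Equiv.trans {F G H : SysMor 𝓧 𝓨} (hFG : F.Equiv G) (hGH : G.Equiv H) :
    F.Equiv H := fun μ => by
  obtain ⟨l₁, a₁, a₂, e₁⟩ := hFG μ
  obtain ⟨l₂, b₁, b₂, e₂⟩ := hGH μ
  obtain ⟨l, hl₁, hl₂⟩ := 𝓧.directed l₁ l₂
  refine ⟨l, a₁.trans hl₁, b₂.trans hl₂, ?_⟩
  calc F.shift μ (a₁.trans hl₁)
      = (G.shift μ a₂).comp (𝓧.bond hl₁) := by rw [← e₁, shift_comp]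
    _ = (H.shift μ b₂).comp (𝓧.bond hl₂) := by rw [shift_comp, ← e₂, shift_comp]
    _ = H.shift μ (b₂.trans hl₂) := shift_comp _ _ _ _

theorem equiv_equivalence : _root_.Equivalence (@SysMor.Equiv 𝓧 𝓨) :=
  ⟨Equiv.refl, Equiv.symm, Equiv.trans⟩

theorem DimLE.of_equiv {F G : SysMor 𝓧 𝓨} (hFG : F.Equiv G) (hF : F.DimLE n) :
    G.DimLE n := fun μ => by
  obtain ⟨l₁, h₁, hf⟩ := hF μ
  obtain ⟨l₂, a₁, a₂, e⟩ := hFG μ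
  obtain ⟨l, hl₁, hl₂⟩ := 𝓧.directed l₁ l₂
  refine ⟨l, a₂.trans hl₂, ?_⟩
  have hG : G.shift μ (a₂.trans hl₂) = (F.shift μ h₁).comp (𝓧.bond hl₁) := by
    rw [shift_comp, ← shift_comp _ _ a₂ hl₂, ← e, shift_comp]
  exact hG ▸ hf.precomp _

theorem comp_shift (G : SysMor 𝓨 𝓩) (F : SysMor 𝓧 𝓨) (ν : 𝓩.Idx) {l : 𝓧.Idx}
    (h : F.idxMap (G.idxMap ν) ≤ l) :
    (G.comp F).shift ν h = (G.hmap ν).comp (F.shift (G.idxMap ν) h) :=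
  HMap.comp_assoc _ _ _

theorem dimLE_comp_of_dimLE_right (G : SysMor 𝓨 𝓩) {F : SysMor 𝓧 𝓨} (hF : F.DimLE n) :
    (G.comp F).DimLE n := fun ν => by
  obtain ⟨l, h, hf⟩ := hF (G.idxMap ν)
  exact ⟨l, h, comp_shift G F ν h ▸ hf.postcomp _⟩

theorem dimLE_comp_of_dimLE_left {G : SysMor 𝓨 𝓩} (hG : G.DimLE n) (F : SysMor 𝓧 𝓨) :
    (G.comp F).DimLE n := fun ν => by
  obtain ⟨μ, hμ, hg⟩ := hG ν
  obtain ⟨l, h₁, h₂, hF⟩ := F.coherent hμ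
  refine ⟨l, h₁, ?_⟩
  have hGF : (G.comp F).shift ν h₁ = (G.shift ν hμ).comp (F.shift μ h₂) := by
    refine (comp_shift G F ν h₁).trans ?_
    rw [shift, ← hF, shift, shift, HMap.comp_assoc]
  exact hGF ▸ hg.precomp _

end SysMor

namespace ProMor

theorem mk_eq_mk_iff {F G : SysMor 𝓧 𝓨} : ProMor.mk F = ProMor.mk G ↔ F.Equiv G :=
  ⟨fun h => SysMor.equiv_equivalence.eqvGen_iff.mp (Quot.eqvGen_exact h), Quot.sound⟩

theorem DimLE.out {f : ProMor 𝓧 𝓨} (hf : f.DimLE n) : (Quot.out f).DimLE n := by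
  obtain ⟨F, rfl, hF⟩ := hf
  exact hF.of_equiv (mk_eq_mk_iff.mp (Quot.out_eq _).symm)

theorem dimLE_comp_of_dimLE_right (g : ProMor 𝓨 𝓩) {f : ProMor 𝓧 𝓨} (hf : f.DimLE n) :
    (g.comp f).DimLE n :=
  ⟨_, rfl, SysMor.dimLE_comp_of_dimLE_right _ hf.out⟩

theorem dimLE_comp_of_dimLE_left {g : ProMor 𝓨 𝓩} (hg : g.DimLE n) (f : ProMor 𝓧 𝓨) :
    (g.comp f).DimLE n :=
  ⟨_, rfl, SysMor.dimLE_comp_of_dimLE_left hg.out _⟩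

end ProMor

theorem shapeMor_comp_sdLE_general
    (𝓧 𝓨 𝓩 : InverseSystem.{u})
    (F : SysMor 𝓧 𝓨) (G : SysMor 𝓨 𝓩) (n : ℕ)
    (h : (ProMor.mk F).DimLE n ∨ (ProMor.mk G).DimLE n) :
    ((ProMor.mk G).comp (ProMor.mk F)).DimLE n :=
  h.elim (ProMor.dimLE_comp_of_dimLE_right _) (ProMor.dimLE_comp_of_dimLE_left · _)

/-- **Corollary 2.14.** Let `F : X → Y`, `G : Y → Z` be two shape morphisms of
topological spaces (given, with respect to HPol-expansions of `X`, `Y` and `Z`, by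
morphisms of inverse systems `F` and `G`). If `sd F ≤ n` or `sd G ≤ n`, then
`sd (G ∘ F) ≤ n`. -/
theorem shapeMor_comp_sdLE (X Y Z : Type u)
    [TopologicalSpace X] [TopologicalSpace Y] [TopologicalSpace Z]
    (𝓧 𝓨 𝓩 : InverseSystem.{u})
    (pX : Expansion X 𝓧) (pY : Expansion Y 𝓨) (pZ : Expansion Z 𝓩)
    (F : SysMor 𝓧 𝓨) (G : SysMor 𝓨 𝓩) (n : ℕ)
    (h : (ProMor.mk F).DimLE n ∨ (ProMor.mk G).DimLE n) :
    ((ProMor.mk G).comp (ProMor.mk F)).DimLE n :=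
  shapeMor_comp_sdLE_general 𝓧 𝓨 𝓩 F G n h

end ShapePaper
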